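/- arXiv:1605.07911 — 4 statements merged into one kernel-verified Lean document; each statement's English description precedes it below -/
import Mathlib

section
/- Let (G,p) be a framework in ℝ^d whose edge directions lie on a conic at infinity defined by a nonzero symmetric matrix Q, i.e., (p_j - p_i)ᵀQ(p_j - p_i) = 0 for every edge {i,j}. Let m(x) = x + (xᵀQx)v be an associated perturbation map for some nonzero v ∈ ℝ^d. Then for each vertex i there exists an affine map A_i of ℝ^d such that A_i(p_j) = m(p_j) for every vertex j in the closed neighborhood of i (i.e., j = i or j adjacent to i). -/
open Matrix

/-!
Along a direction `y - x` on which the quadratic form `q(z) = zᵀQz` vanishes, the polarization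
identity makes `q(y) = (xᵀQ + Qx)·y - q(x)` affine in `y`. All neighbours of `p i` lie in
such directions from `p i`, so on the closed neighborhood of `i` the perturbation
`y ↦ y + q(y) v` coincides with the affine map `y ↦ y + ((xᵀQ + Qx)·y - q(x)) v` for `x = p i`.
-/

section QuadraticForm

variable {ι R : Type*} [Fintype ι] [CommRing R]

theorem sub_dotProduct_mulVec_sub (Q : Matrix ι ι R) (x y : ι → R) :
    (y - x) ⬝ᵥ Q *ᵥ (y - x) = y ⬝ᵥ Q *ᵥ y - (x ᵥ* Q + Q *ᵥ x) ⬝ᵥ y + x ⬝ᵥ Q *ᵥ x := by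
  rw [add_dotProduct, ← dotProduct_mulVec, dotProduct_comm (Q *ᵥ x), mulVec_sub,
    sub_dotProduct, dotProduct_sub, dotProduct_sub]
  ring

theorem dotProduct_mulVec_self_eq_of_null (Q : Matrix ι ι R) {x y : ι → R}
    (h : (y - x) ⬝ᵥ Q *ᵥ (y - x) = 0) :
    y ⬝ᵥ Q *ᵥ y = (x ᵥ* Q + Q *ᵥ x) ⬝ᵥ y - x ⬝ᵥ Q *ᵥ x := by
  rw [sub_dotProduct_mulVec_sub] at h
  linear_combination h

theorem exists_affine_eq_add_quadratic_smul_on_null_cone [DecidableEq ι] (Q : Matrix ι ι R)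
    (v x : ι → R) :
    ∃ (A : Matrix ι ι R) (t : ι → R), ∀ y : ι → R, (y - x) ⬝ᵥ Q *ᵥ (y - x) = 0 →
      A *ᵥ y + t = y + (y ⬝ᵥ Q *ᵥ y) • v := by
  refine ⟨1 + vecMulVec v (x ᵥ* Q + Q *ᵥ x), -(x ⬝ᵥ Q *ᵥ x) • v, fun y hy => ?_⟩
  rw [dotProduct_mulVec_self_eq_of_null Q hy, add_mulVec, one_mulVec, vecMulVec_mulVec,
    op_smul_eq_smul]
  module

end QuadraticForm

theorem neighborhood_affine_preequivalent_general {d n : ℕ} (G : SimpleGraph (Fin n))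
    (p : Fin n → Fin d → ℝ)
    (Q : Matrix (Fin d) (Fin d) ℝ)
    (hconic : ∀ i j : Fin n, G.Adj i j →
      (p j - p i) ⬝ᵥ Q.mulVec (p j - p i) = 0)
    (v : Fin d → ℝ) :
    ∀ i : Fin n, ∃ (A : Matrix (Fin d) (Fin d) ℝ) (t : Fin d → ℝ),
      ∀ j : Fin n, (j = i ∨ G.Adj i j) →
        A.mulVec (p j) + t = p j + (p j ⬝ᵥ Q.mulVec (p j)) • v := by
  intro i
  obtain ⟨A, t, hA⟩ := exists_affine_eq_add_quadratic_smul_on_null_cone Q v (p i)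
  refine ⟨A, t, fun j hj => hA (p j) ?_⟩
  rcases hj with rfl | hadj
  · simp
  · exact hconic i j hadj

/-- If the edge directions of a framework `(G, p)` lie on a conic at infinity defined by
a nonzero symmetric matrix `Q`, and `m(x) = x + (xᵀQx)·v` is an associated perturbation
map, then for each vertex `i` there is an affine map agreeing with `m` on the closed
neighborhood of `i`. -/
theorem neighborhood_affine_preequivalent {d n : ℕ} (G : SimpleGraph (Fin n))
    (p : Fin n → Fin d → ℝ)
    (Q : Matrix (Fin d) (Fin d) ℝ) (hQsymm : Q.IsSymm) (hQne : Q ≠ 0)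
    (hconic : ∀ i j : Fin n, G.Adj i j →
      (p j - p i) ⬝ᵥ Q.mulVec (p j - p i) = 0)
    (v : Fin d → ℝ) (hv : v ≠ 0) :
    ∀ i : Fin n, ∃ (A : Matrix (Fin d) (Fin d) ℝ) (t : Fin d → ℝ),
      ∀ j : Fin n, (j = i ∨ G.Adj i j) →
        A.mulVec (p j) + t = p j + (p j ⬝ᵥ Q.mulVec (p j)) • v :=
  neighborhood_affine_preequivalent_general G p Q hconic v
end

section
/- A nontrivial inhomogeneous quadric in ℝ^d whose zero set has full d-dimensional affine span cannot have d cone points in general affine position (i.e., d cone points whose affine span is (d-1)-dimensional, together with the full-span hypothesis forcing a contradiction). Equivalently, the set of cone points of such a quadric is an affine subspace of dimension at most d-2. -/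
/-!
At a cone point `p` the restriction of the quadric `q` to every line through `p` and another
point of the zero set vanishes identically, so its linear coefficient `∇q(p) ⬝ᵥ (y - p)` does.
Since the zero set affinely spans the space, `∇q(p) = 2 Q p + l = 0`. Hence `Q` kills all
differences of cone points, so `ker Q` contains the hyperplane `V` spanned by `d` affinely
independent cone points, and `q(y) = (y - p)ᵀ Q (y - p)`. If `ker Q` is everything then `Q`, `l`
and `c` vanish. Otherwise `ker Q = V`, and a symmetric form whose kernel is a hyperplane is
isotropic only on that kernel, so the zero set lies in the hyperplane `p + V`, contradicting
full span.
-/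

open Matrix

theorem Submodule.isCoatom_of_finrank_add_one_eq {K V : Type*} [DivisionRing K] [AddCommGroup V]
    [Module K V] [FiniteDimensional K V] {W : Submodule K V}
    (h : Module.finrank K W + 1 = Module.finrank K V) : IsCoatom W := by
  refine ⟨fun hW => ?_, fun U hWU => Submodule.eq_top_of_finrank_eq ?_⟩
  · rw [hW, finrank_top] at h
    omega
  · have := Submodule.finrank_lt_finrank_of_lt hWU
    have := U.finrank_le
    omega

theorem AffineIndependent.isCoatom_vectorSpan {k V P ι : Type*} [DivisionRing k]
    [AddCommGroup V] [Module k V] [FiniteDimensional k V] [AddTorsor V P] [Fintype ι]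
    [Nonempty ι] {p : ι → P} (hp : AffineIndependent k p)
    (hcard : Fintype.card ι = Module.finrank k V) :
    IsCoatom (vectorSpan k (Set.range p)) := by
  obtain ⟨m, hm⟩ := Nat.exists_eq_succ_of_ne_zero (Fintype.card_ne_zero (α := ι))
  exact Submodule.isCoatom_of_finrank_add_one_eq
    (by rw [hp.finrank_vectorSpan hm, ← hcard, hm])

namespace Matrix

variable {n : Type*} [Fintype n]

theorem eq_zero_of_forall_dotProduct_eq_of_affineSpan_eq_top {K : Type*} [Field K]
    {S : Set (n → K)} (hS : affineSpan K S = ⊤) {w : n → K} {a : K}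
    (h : ∀ y ∈ S, w ⬝ᵥ y = a) : w = 0 := by
  have hker : vectorSpan K S ≤ LinearMap.ker (dotProductBilin K K w) := by
    rw [vectorSpan_def, Submodule.span_le]
    rintro _ ⟨y, hy, z, hz, rfl⟩
    simp [dotProduct_sub, h y hy, h z hz]
  refine dotProduct_eq_zero w fun v => ?_
  simpa using
    hker (AffineSubspace.vectorSpan_eq_top_of_affineSpan_eq_top K _ _ hS ▸ Submodule.mem_top)

theorem IsSymm.dotProduct_mulVec_comm {R : Type*} [CommSemiring R] {Q : Matrix n n R}
    (hQ : Q.IsSymm) (v w : n → R) : v ⬝ᵥ Q *ᵥ w = w ⬝ᵥ Q *ᵥ v := by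
  rw [dotProduct_mulVec, ← mulVec_transpose, hQ.eq, dotProduct_comm]

/-- If `Q w ≠ 0`, then `ker Q` and `w` span everything, and `Q w` is orthogonal to both. -/
theorem IsSymm.mulVec_eq_zero_of_isCoatom_ker {K : Type*} [Field K] {Q : Matrix n n K}
    (hQ : Q.IsSymm) (hker : IsCoatom (LinearMap.ker Q.mulVecLin)) {w : n → K}
    (hw : w ⬝ᵥ Q *ᵥ w = 0) : Q *ᵥ w = 0 := by
  by_contra hQw
  have hspan : LinearMap.ker Q.mulVecLin ⊔ Submodule.span K {w} = ⊤ := by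
    refine hker.lt_iff.mp (lt_of_le_of_ne le_sup_left fun h => hQw ?_)
    have hwK : w ∈ LinearMap.ker Q.mulVecLin :=
      h ▸ Submodule.mem_sup_right (Submodule.mem_span_singleton_self w)
    exact hwK
  refine hQw (dotProduct_eq_zero _ fun z => ?_)
  obtain ⟨v, hv, _, hs, rfl⟩ := Submodule.mem_sup.mp (hspan ▸ Submodule.mem_top : z ∈ _)
  obtain ⟨s, rfl⟩ := Submodule.mem_span_singleton.mp hs
  have hv : Q *ᵥ v = 0 := hv
  rw [dotProduct_add, dotProduct_comm, ← hQ.dotProduct_mulVec_comm, hv, dotProduct_smul,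
    dotProduct_comm (Q *ᵥ w), hw]
  simp

end Matrix

section Quadric

variable {n : Type*} [Fintype n] (Q : Matrix n n ℝ) (l : n → ℝ) (c : ℝ)

def quadricValue (x : n → ℝ) : ℝ := x ⬝ᵥ Q *ᵥ x + l ⬝ᵥ x + c

def quadric : Set (n → ℝ) := {x | quadricValue Q l c x = 0}

def IsConePoint (p : n → ℝ) : Prop :=
  p ∈ quadric Q l c ∧ ∀ y ∈ quadric Q l c, ∀ t : ℝ, p + t • (y - p) ∈ quadric Q l c

variable {Q l c}

theorem quadricValue_add_smul (hQ : Q.IsSymm) (z v : n → ℝ) (t : ℝ) :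
    quadricValue Q l c (z + t • v) =
      quadricValue Q l c z + t * (((2 : ℝ) • Q *ᵥ z + l) ⬝ᵥ v) +
        t ^ 2 * (v ⬝ᵥ Q *ᵥ v) := by
  have hsymm := hQ.dotProduct_mulVec_comm v z
  simp only [quadricValue, mulVec_add, mulVec_smul, add_dotProduct, dotProduct_add,
    smul_dotProduct, dotProduct_smul, smul_eq_mul, dotProduct_comm (Q *ᵥ z) v] at hsymm ⊢
  linear_combination (-t) * hsymm

theorem quadricValue_eq_of_gradient_eq_zero (hQ : Q.IsSymm) {p : n → ℝ}
    (hp : p ∈ quadric Q l c) (hgrad : (2 : ℝ) • Q *ᵥ p + l = 0) (y : n → ℝ) :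
    quadricValue Q l c y = (y - p) ⬝ᵥ Q *ᵥ (y - p) := by
  simpa [hp.out, hgrad] using quadricValue_add_smul (l := l) (c := c) hQ p (y - p) 1

namespace IsConePoint

variable {p : n → ℝ}

theorem gradient_dotProduct_sub_eq_zero (hQ : Q.IsSymm) (hp : IsConePoint Q l c p)
    {y : n → ℝ} (hy : y ∈ quadric Q l c) :
    ((2 : ℝ) • Q *ᵥ p + l) ⬝ᵥ (y - p) = 0 := by
  have hpos : quadricValue Q l c (p + (1 : ℝ) • (y - p)) = 0 := hp.2 y hy 1
  have hneg : quadricValue Q l c (p + (-1 : ℝ) • (y - p)) = 0 := hp.2 y hy (-1)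
  rw [quadricValue_add_smul hQ, hp.1.out] at hpos hneg
  linarith

theorem gradient_eq_zero (hQ : Q.IsSymm) (hspan : affineSpan ℝ (quadric Q l c) = ⊤)
    (hp : IsConePoint Q l c p) : (2 : ℝ) • Q *ᵥ p + l = 0 :=
  eq_zero_of_forall_dotProduct_eq_of_affineSpan_eq_top hspan fun y hy =>
    sub_eq_zero.mp (by rw [← dotProduct_sub]; exact hp.gradient_dotProduct_sub_eq_zero hQ hy)

end IsConePoint

theorem vectorSpan_le_ker_of_gradient_eq_zero {ι : Type*} {x : ι → n → ℝ}
    (hgrad : ∀ k, (2 : ℝ) • Q *ᵥ x k + l = 0) :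
    vectorSpan ℝ (Set.range x) ≤ LinearMap.ker Q.mulVecLin := by
  rw [vectorSpan_def, Submodule.span_le]
  rintro _ ⟨_, ⟨i, rfl⟩, _, ⟨j, rfl⟩, rfl⟩
  have h : Q *ᵥ x i = Q *ᵥ x j := by simpa using (hgrad i).trans (hgrad j).symm
  simp [mulVec_sub, h]

theorem sub_mem_ker_of_mem_quadric (hQ : Q.IsSymm) (hker : IsCoatom (LinearMap.ker Q.mulVecLin))
    {p : n → ℝ} (hp : p ∈ quadric Q l c) (hgrad : (2 : ℝ) • Q *ᵥ p + l = 0)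
    {y : n → ℝ} (hy : y ∈ quadric Q l c) : y - p ∈ LinearMap.ker Q.mulVecLin :=
  hQ.mulVec_eq_zero_of_isCoatom_ker hker
    ((quadricValue_eq_of_gradient_eq_zero hQ hp hgrad y).symm.trans hy.out)

end Quadric

/-- A nontrivial inhomogeneous quadric in ℝ^d whose zero set has full d-dimensional
affine span cannot have `d` cone points in general affine position (i.e. `d` affinely
independent cone points). -/
theorem no_d_cone_points_in_general_position {d : ℕ}
    (Q : Matrix (Fin d) (Fin d) ℝ) (hQsymm : Q.IsSymm) (l : Fin d → ℝ) (c : ℝ)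
    (hnontriv : ¬ (Q = 0 ∧ l = 0 ∧ c = 0))
    (hspan : affineSpan ℝ {x : Fin d → ℝ | x ⬝ᵥ Q.mulVec x + l ⬝ᵥ x + c = 0} = ⊤)
    (x : Fin d → Fin d → ℝ)
    (hindep : AffineIndependent ℝ x)
    (hcone : ∀ k : Fin d,
      (x k ⬝ᵥ Q.mulVec (x k) + l ⬝ᵥ (x k) + c = 0) ∧
      ∀ y : Fin d → ℝ, y ⬝ᵥ Q.mulVec y + l ⬝ᵥ y + c = 0 →
        ∀ t : ℝ, (x k + t • (y - x k)) ⬝ᵥ Q.mulVec (x k + t • (y - x k)) +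
          l ⬝ᵥ (x k + t • (y - x k)) + c = 0) :
    False := by
  change affineSpan ℝ (quadric Q l c) = ⊤ at hspan
  change ∀ k, IsConePoint Q l c (x k) at hcone
  cases d with
  | zero =>
    obtain ⟨y, hy⟩ := (affineSpan_nonempty ℝ).mp (by rw [hspan]; exact ⟨0, trivial⟩)
    exact hnontriv
      ⟨Subsingleton.elim _ _, Subsingleton.elim _ _, by simpa [quadricValue] using hy.out⟩
  | succ d =>
    have hgrad k := (hcone k).gradient_eq_zero hQsymm hspan
    have hV := hindep.isCoatom_vectorSpan (by simp)
    rcases hV.le_iff.mp (vectorSpan_le_ker_of_gradient_eq_zero hgrad) with hker | hker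
    · have hQ : Q = 0 := toLin'.map_eq_zero_iff.mp (LinearMap.ker_eq_top.mp hker)
      have hl : l = 0 := by simpa [hQ] using hgrad 0
      exact hnontriv ⟨hQ, hl, by simpa [quadricValue, hQ, hl] using (hcone 0).1.out⟩
    · have hsub : quadric Q l c ⊆ affineSpan ℝ (Set.range x) := fun y hy => by
        have hx₀ := mem_affineSpan ℝ (Set.mem_range_self (f := x) 0)
        rw [SetLike.mem_coe, ← AffineSubspace.vsub_right_mem_direction_iff_mem hx₀,
          direction_affineSpan, ← hker]
        exact sub_mem_ker_of_mem_quadric hQsymm (hker ▸ hV) (hcone 0).1 (hgrad 0) hy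
      have htop : affineSpan ℝ (Set.range x) = ⊤ :=
        top_le_iff.mp (hspan ▸ affineSpan_le.mpr hsub)
      exact hV.1 (AffineSubspace.vectorSpan_eq_top_of_affineSpan_eq_top ℝ _ _ htop)
end

section
/- Suppose Ω is an n×n equilibrium stress matrix for a framework (G,p) in ℝ^d, i.e., Ω is symmetric, supported on edges of G, has the all-ones vector and all coordinate vectors of p in its kernel. Form the (n+1)×(n+1) matrix Ω' by adding a row and column of zeros. Then Ω' is an equilibrium stress matrix for the coned framework p₀*(G,p) in ℝ^{d+1} (with p placed in a hyperplane of ℝ^{d+1} and p₀ outside that hyperplane), and Ω' has the same rank and the same number of positive and negative eigenvalues as Ω. -/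
/-!
`padStress Ω *ᵥ v` is `Ω` applied to the old part of `v`, with a zero appended, and the old parts
of the coned coordinate vectors are coordinate vectors of `p` or the constant `h`, all in the
kernel of `Ω`. Spectrally, `padStress Ω` is the block sum of `Ω` and the `1 × 1` zero matrix, so
its characteristic polynomial is `charpoly Ω * X`: the only new eigenvalue is `0`, which is
neither positive, negative, nor counted by the rank.
-/

open Matrix Polynomial

/-- Padding an equilibrium stress matrix with a zero row and column for the cone vertex. -/
def padStress {n : ℕ} (Ω : Matrix (Fin n) (Fin n) ℝ) :
    Matrix (Fin (n + 1)) (Fin (n + 1)) ℝ :=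
  fun i j =>
    Fin.lastCases (motive := fun _ => ℝ) 0
      (fun a => Fin.lastCases (motive := fun _ => ℝ) 0 (fun b => Ω a b) j) i

namespace Matrix.IsHermitian

variable {m : Type*} [Fintype m] [DecidableEq m] {A : Matrix m m ℝ}

theorem card_eigenvalues_eq_countP_roots (hA : A.IsHermitian) (P : ℝ → Prop) [DecidablePred P] :
    Fintype.card {i // P (hA.eigenvalues i)} = A.charpoly.roots.countP P := by
  rw [hA.roots_charpoly_eq_eigenvalues, Multiset.countP_map, Fintype.card_subtype]
  rfl

theorem card_eigenvalues_eq_of_charpoly_eq_mul_X {m' : Type*} [Fintype m'] [DecidableEq m']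
    {B : Matrix m' m' ℝ} (hA : A.IsHermitian) (hB : B.IsHermitian)
    (hAB : B.charpoly = A.charpoly * X) (P : ℝ → Prop) [DecidablePred P] (hP : ¬ P 0) :
    Fintype.card {i // P (hB.eigenvalues i)} = Fintype.card {i // P (hA.eigenvalues i)} := by
  rw [card_eigenvalues_eq_countP_roots, card_eigenvalues_eq_countP_roots, hAB,
    roots_mul (mul_ne_zero A.charpoly_monic.ne_zero X_ne_zero), roots_X,
    add_comm, Multiset.singleton_add, Multiset.countP_cons_of_neg _ hP]

end Matrix.IsHermitian

section padStress

variable {n : ℕ} (Ω : Matrix (Fin n) (Fin n) ℝ)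

@[simp]
theorem padStress_castSucc_castSucc (a b : Fin n) :
    padStress Ω a.castSucc b.castSucc = Ω a b := by
  simp [padStress]

@[simp]
theorem padStress_last_apply (j : Fin (n + 1)) : padStress Ω (Fin.last n) j = 0 := by
  simp [padStress]

@[simp]
theorem padStress_apply_last (i : Fin (n + 1)) : padStress Ω i (Fin.last n) = 0 := by
  induction i using Fin.lastCases <;> simp [padStress]

theorem padStress_eq_reindex_fromBlocks :
    padStress Ω = reindex finSumFinEquiv finSumFinEquiv
      (fromBlocks Ω 0 0 (0 : Matrix (Fin 1) (Fin 1) ℝ)) := by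
  have hlast : Fin.last n = Fin.natAdd n (0 : Fin 1) := rfl
  have hcast : ∀ a : Fin n, a.castSucc = Fin.castAdd 1 a := fun _ => rfl
  ext i j
  induction i using Fin.lastCases <;> induction j using Fin.lastCases <;>
    simp only [padStress_last_apply, padStress_apply_last, padStress_castSucc_castSucc] <;>
    simp [hlast, hcast]

theorem charpoly_padStress : (padStress Ω).charpoly = Ω.charpoly * X := by
  rw [padStress_eq_reindex_fromBlocks, charpoly_reindex, charpoly_fromBlocks_zero₂₁,
    ← diagonal_zero, charpoly_diagonal]
  simp

theorem padStress_mulVec (v : Fin (n + 1) → ℝ) :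
    padStress Ω *ᵥ v = Fin.snoc (Ω *ᵥ fun a => v a.castSucc) 0 := by
  ext i
  induction i using Fin.lastCases with
  | last => simp [mulVec, dotProduct]
  | cast a => simp [mulVec, dotProduct, Fin.sum_univ_castSucc]

theorem padStress_mulVec_eq_zero_iff (v : Fin (n + 1) → ℝ) :
    padStress Ω *ᵥ v = 0 ↔ Ω *ᵥ (fun a => v a.castSucc) = 0 := by
  have hzero : (0 : Fin (n + 1) → ℝ) = Fin.snoc (0 : Fin n → ℝ) 0 := by
    ext i; induction i using Fin.lastCases <;> simp
  rw [padStress_mulVec, hzero, Fin.snoc_inj]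
  simp

theorem padStress_eq_zero_of_not_adj {G : SimpleGraph (Fin n)} {G' : SimpleGraph (Fin (n + 1))}
    (hsupp : ∀ i j, i ≠ j → ¬ G.Adj i j → Ω i j = 0)
    (hG' : ∀ a b : Fin n, G.Adj a b → G'.Adj a.castSucc b.castSucc) :
    ∀ i j, i ≠ j → ¬ G'.Adj i j → padStress Ω i j = 0 := by
  intro i j hij hadj
  induction i using Fin.lastCases with
  | last => exact padStress_last_apply Ω j
  | cast a =>
    induction j using Fin.lastCases with
    | last => exact padStress_apply_last Ω _
    | cast b =>
      rw [padStress_castSucc_castSucc]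
      exact hsupp a b (fun hab => hij (hab ▸ rfl)) (fun hG => hadj (hG' a b hG))

end padStress

theorem cone_stress_pad_general {d n : ℕ}
    (G : SimpleGraph (Fin n)) (p : Fin n → Fin d → ℝ)
    (Ω : Matrix (Fin n) (Fin n) ℝ) (hΩ : Ω.IsHermitian)
    (hsupp : ∀ i j, i ≠ j → ¬ G.Adj i j → Ω i j = 0)
    (hones : Ω.mulVec 1 = 0)
    (hcoord : ∀ k : Fin d, Ω.mulVec (fun i => p i k) = 0)
    -- the coned framework:
    (G' : SimpleGraph (Fin (n + 1))) (p' : Fin (n + 1) → Fin (d + 1) → ℝ) (h : ℝ)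
    (hG'old : ∀ a b : Fin n, (G'.Adj a.castSucc b.castSucc ↔ G.Adj a b))
    (hp'old : ∀ (a : Fin n) (k : Fin d), p' a.castSucc k.castSucc = p a k)
    (hp'flat : ∀ a : Fin n, p' a.castSucc (Fin.last d) = h)
    (hΩ' : (padStress Ω).IsHermitian) :
    (padStress Ω).IsSymm ∧
    (∀ i j, i ≠ j → ¬ G'.Adj i j → padStress Ω i j = 0) ∧
    (padStress Ω).mulVec 1 = 0 ∧
    (∀ k : Fin (d + 1), (padStress Ω).mulVec (fun i => p' i k) = 0) ∧
    (padStress Ω).rank = Ω.rank ∧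
    Fintype.card {i // 0 < hΩ'.eigenvalues i} = Fintype.card {i // 0 < hΩ.eigenvalues i} ∧
    Fintype.card {i // hΩ'.eigenvalues i < 0} =
      Fintype.card {i // hΩ.eigenvalues i < 0} := by
  have hcount := hΩ.card_eigenvalues_eq_of_charpoly_eq_mul_X hΩ' (charpoly_padStress Ω)
  refine ⟨isHermitian_iff_isSymm.mp hΩ',
    padStress_eq_zero_of_not_adj Ω hsupp fun a b => (hG'old a b).mpr,
    (padStress_mulVec_eq_zero_iff Ω 1).mpr hones, fun k => ?_, ?_,
    hcount (0 < ·) (lt_irrefl 0), hcount (· < 0) (lt_irrefl 0)⟩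
  · rw [padStress_mulVec_eq_zero_iff]
    induction k using Fin.lastCases with
    | last =>
      have hflat : (fun a => p' a.castSucc (Fin.last d)) = h • (1 : Fin n → ℝ) := by
        ext a; simp [hp'flat]
      rw [hflat, mulVec_smul, hones, smul_zero]
    | cast k => simpa only [hp'old] using hcoord k
  · rw [hΩ'.rank_eq_card_non_zero_eigs, hΩ.rank_eq_card_non_zero_eigs]
    exact hcount (· ≠ 0) (not_not.mpr rfl)

/-- If `Ω` is an equilibrium stress matrix for a framework `(G, p)` in ℝ^d, then the
matrix `Ω'` obtained by adding a zero row and column is an equilibrium stress matrix for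
the coned framework in ℝ^(d+1) (with `p` placed in the hyperplane `x_{d+1} = h` and the
cone point off that hyperplane), and `Ω'` has the same rank and the same numbers of
positive and negative eigenvalues as `Ω`. -/
theorem cone_stress_pad {d n : ℕ}
    (G : SimpleGraph (Fin n)) (p : Fin n → Fin d → ℝ)
    (Ω : Matrix (Fin n) (Fin n) ℝ) (hΩ : Ω.IsHermitian)
    (hsupp : ∀ i j, i ≠ j → ¬ G.Adj i j → Ω i j = 0)
    (hones : Ω.mulVec 1 = 0)
    (hcoord : ∀ k : Fin d, Ω.mulVec (fun i => p i k) = 0)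
    -- the coned framework:
    (G' : SimpleGraph (Fin (n + 1))) (p' : Fin (n + 1) → Fin (d + 1) → ℝ) (h : ℝ)
    (hG'old : ∀ a b : Fin n, (G'.Adj a.castSucc b.castSucc ↔ G.Adj a b))
    (hG'cone : ∀ a : Fin n, G'.Adj (Fin.last n) a.castSucc)
    (hp'old : ∀ (a : Fin n) (k : Fin d), p' a.castSucc k.castSucc = p a k)
    (hp'flat : ∀ a : Fin n, p' a.castSucc (Fin.last d) = h)
    (hp'apex : p' (Fin.last n) (Fin.last d) ≠ h)
    (hΩ' : (padStress Ω).IsHermitian) :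
    (padStress Ω).IsSymm ∧
    (∀ i j, i ≠ j → ¬ G'.Adj i j → padStress Ω i j = 0) ∧
    (padStress Ω).mulVec 1 = 0 ∧
    (∀ k : Fin (d + 1), (padStress Ω).mulVec (fun i => p' i k) = 0) ∧
    (padStress Ω).rank = Ω.rank ∧
    Fintype.card {i // 0 < hΩ'.eigenvalues i} = Fintype.card {i // 0 < hΩ.eigenvalues i} ∧
    Fintype.card {i // hΩ'.eigenvalues i < 0} =
      Fintype.card {i // hΩ.eigenvalues i < 0} :=
  cone_stress_pad_general G p Ω hΩ hsupp hones hcoord G' p' h hG'old hp'old hp'flat hΩ'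
end

section
/- Let {x₁,…,xₙ} be at least 3 distinct collinear points in ℝ^d. Then the complete graph framework on these points supports a positive semidefinite equilibrium stress matrix Ω of rank n - 2 (corank 2), i.e., a symmetric PSD matrix with Ω·𝟙 = 0 and ∑_j Ω_{ij}(x_i - x_j) = 0 for all i, whose kernel is exactly the 2-dimensional span of the all-ones vector and the parametrization vector of the points along the line. -/
/-!
Take for `Ω` the orthogonal projection onto the orthogonal complement of `V = span {𝟙, t}`.
Being an orthogonal projection it is positive semidefinite, its kernel is `Vᗮᗮ = V`, and its rank
is `n - dim V = n - 2`, since `𝟙` and `t` are independent as soon as `t` takes two distinct values.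
Every coordinate vector `i ↦ a k + t i * u k` of the configuration lies in `V`, so `Ω` is an
equilibrium stress.
-/

open Matrix

namespace Submodule

variable {R ι : Type*} [Ring R] (W : Submodule R (ι → R))

def toEuclidean : Submodule R (EuclideanSpace R ι) :=
  W.comap (WithLp.linearEquiv 2 R (ι → R)).toLinearMap

lemma finrank_toEuclidean : Module.finrank R W.toEuclidean = Module.finrank R W := by
  rw [toEuclidean, comap_equiv_eq_map_symm, LinearEquiv.finrank_map_eq]

end Submodule

namespace Matrix

variable {𝕜 ι : Type*} [RCLike 𝕜] [Fintype ι] [DecidableEq ι]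

noncomputable def starProjectionMatrix (K : Submodule 𝕜 (EuclideanSpace 𝕜 ι)) : Matrix ι ι 𝕜 :=
  toEuclideanLin.symm K.starProjection

section starProjectionMatrix

variable (K : Submodule 𝕜 (EuclideanSpace 𝕜 ι))

lemma toEuclideanLin_starProjectionMatrix :
    toEuclideanLin (starProjectionMatrix K) = K.starProjection :=
  toEuclideanLin.apply_symm_apply _

lemma starProjectionMatrix_mulVec (w : ι → 𝕜) :
    starProjectionMatrix K *ᵥ w = (K.starProjection (WithLp.toLp 2 w)).ofLp :=
  congrArg WithLp.ofLp (LinearMap.congr_fun (toEuclideanLin_starProjectionMatrix K) _)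

lemma starProjectionMatrix_mulVec_eq_zero_iff (w : ι → 𝕜) :
    starProjectionMatrix K *ᵥ w = 0 ↔ WithLp.toLp 2 w ∈ Kᗮ := by
  rw [starProjectionMatrix_mulVec, WithLp.ofLp_eq_zero, K.starProjection_apply_eq_zero_iff]

open scoped ComplexOrder in
lemma posSemidef_starProjectionMatrix : (starProjectionMatrix K).PosSemidef := by
  rw [← isPositive_toEuclideanLin_iff, toEuclideanLin_starProjectionMatrix]
  exact K.isSymmetricProjection_starProjection.isPositive

lemma rank_starProjectionMatrix : (starProjectionMatrix K).rank = Module.finrank 𝕜 K := by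
  rw [rank_eq_finrank_range_toLin _ (PiLp.basisFun 2 𝕜 ι) (PiLp.basisFun 2 𝕜 ι),
    ← toLpLin_eq_toLin, toEuclideanLin_starProjectionMatrix]
  rw [K.range_starProjection]

end starProjectionMatrix

section orthogonal

variable (W : Submodule 𝕜 (ι → 𝕜))

lemma starProjectionMatrix_orthogonal_mulVec_eq_zero_iff (w : ι → 𝕜) :
    starProjectionMatrix W.toEuclideanᗮ *ᵥ w = 0 ↔ w ∈ W := by
  rw [starProjectionMatrix_mulVec_eq_zero_iff, Submodule.orthogonal_orthogonal]
  rfl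

lemma rank_starProjectionMatrix_orthogonal :
    (starProjectionMatrix W.toEuclideanᗮ).rank = Fintype.card ι - Module.finrank 𝕜 W := by
  have hsum := W.toEuclidean.finrank_add_finrank_orthogonal
  rw [W.finrank_toEuclidean, finrank_euclideanSpace] at hsum
  rw [rank_starProjectionMatrix]
  omega

end orthogonal

end Matrix

lemma linearIndependent_one_pair {K ι : Type*} [Field K] {t : ι → K} {i j : ι} (h : t i ≠ t j) :
    LinearIndependent K ![(1 : ι → K), t] := by
  refine LinearIndependent.pair_iff.mpr fun s c hsc => ?_
  have hi : s + c * t i = 0 := by simpa using congrFun hsc i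
  have hj : s + c * t j = 0 := by simpa using congrFun hsc j
  have hc : c = 0 := by
    by_contra hc
    exact h (mul_left_cancel₀ hc (by linear_combination hi - hj))
  exact ⟨by simpa [hc] using hi, hc⟩

lemma finrank_span_one_pair {K ι : Type*} [Field K] {t : ι → K} {i j : ι} (h : t i ≠ t j) :
    Module.finrank K (Submodule.span K {(1 : ι → K), t}) = 2 := by
  rw [← Matrix.range_cons_cons_empty 1 t ![], finrank_span_eq_card (linearIndependent_one_pair h),
    Fintype.card_fin]

theorem collinear_psd_stress_general {d n : ℕ} (hn : 3 ≤ n)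
    (a u : Fin d → ℝ)
    (t : Fin n → ℝ) (ht : Function.Injective t)
    (x : Fin n → Fin d → ℝ) (hx : ∀ i, x i = a + t i • u) :
    ∃ Ω : Matrix (Fin n) (Fin n) ℝ,
      Ω.PosSemidef ∧
      Ω.mulVec 1 = 0 ∧
      (∀ k : Fin d, Ω.mulVec (fun i => x i k) = 0) ∧
      (∀ w : Fin n → ℝ, Ω.mulVec w = 0 ↔
        w ∈ Submodule.span ℝ ({(1 : Fin n → ℝ), t} : Set (Fin n → ℝ))) ∧
      Ω.rank = n - 2 := by
  set V := Submodule.span ℝ ({(1 : Fin n → ℝ), t} : Set (Fin n → ℝ))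
  have hV : Module.finrank ℝ V = 2 :=
    finrank_span_one_pair (i := ⟨0, by omega⟩) (j := ⟨1, by omega⟩) (ht.ne (by simp))
  have h1 : (1 : Fin n → ℝ) ∈ V := Submodule.mem_span_pair.mpr ⟨1, 0, by simp⟩
  have hcoord (k : Fin d) : (fun i => x i k) ∈ V :=
    Submodule.mem_span_pair.mpr ⟨a k, u k, by ext i; simp [hx, mul_comm]⟩
  have hker := starProjectionMatrix_orthogonal_mulVec_eq_zero_iff V
  exact ⟨_, posSemidef_starProjectionMatrix _, (hker 1).mpr h1, fun k => (hker _).mpr (hcoord k),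
    hker, by rw [rank_starProjectionMatrix_orthogonal, hV, Fintype.card_fin]⟩

/-- At least three distinct collinear points `x i = a + t i • u` support a PSD
equilibrium stress matrix of rank `n - 2`, whose kernel is exactly the span of the
all-ones vector and the parametrization vector `t`. -/
theorem collinear_psd_stress {d n : ℕ} (hn : 3 ≤ n)
    (a u : Fin d → ℝ) (hu : u ≠ 0)
    (t : Fin n → ℝ) (ht : Function.Injective t)
    (x : Fin n → Fin d → ℝ) (hx : ∀ i, x i = a + t i • u) :
    ∃ Ω : Matrix (Fin n) (Fin n) ℝ,
      Ω.PosSemidef ∧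
      Ω.mulVec 1 = 0 ∧
      (∀ k : Fin d, Ω.mulVec (fun i => x i k) = 0) ∧
      (∀ w : Fin n → ℝ, Ω.mulVec w = 0 ↔
        w ∈ Submodule.span ℝ ({(1 : Fin n → ℝ), t} : Set (Fin n → ℝ))) ∧
      Ω.rank = n - 2 :=
  collinear_psd_stress_general hn a u t ht x hx
end
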